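/- Let X1 and X2 be i.i.d. finitely supported real-valued random variables. Then (1/2)·I(X1 − X2; X2) ≤ I(X1 + X2; X2) ≤ 2·I(X1 − X2; X2), where I denotes mutual information. Equivalently, 1/2 ≤ (H(X1+X2) − H(X1)) / (H(X1−X2) − H(X1)) ≤ 2 whenever the denominator is nonzero. -/
import Mathlib


open scoped Classical BigOperators

/-- Probability of the event `X = a` under the probability mass function `μ`. -/
noncomputable def pr {Ω α : Type*} [Fintype Ω] (μ : Ω → ℝ) (X : Ω → α) (a : α) : ℝ :=
  ∑ ω : Ω, if X ω = a then μ ω else 0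

/-- Shannon entropy of the discrete random variable `X` on the finite probability
space with mass function `μ`. -/
noncomputable def entropy {Ω α : Type*} [Fintype Ω] (μ : Ω → ℝ) (X : Ω → α) : ℝ :=
  ∑ a ∈ Finset.univ.image X, Real.negMulLog (pr μ X a)

/-- Mutual information `I(X; Y) = H(X) + H(Y) − H(X, Y)`. -/
noncomputable def mutualInfo {Ω : Type*} [Fintype Ω] (μ : Ω → ℝ) (X Y : Ω → ℝ) : ℝ :=
  entropy μ X + entropy μ Y - entropy μ (fun ω => (X ω, Y ω))

attribute [irreducible] pr entropy

namespace Aux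

open Finset Real

variable {Ω Ω' α β γ δ : Type*} [Fintype Ω] [Fintype Ω']

lemma pr_nonneg (μ : Ω → ℝ) (hμ0 : ∀ ω, 0 ≤ μ ω) (X : Ω → α) (a : α) : 0 ≤ pr μ X a := by
  unfold pr
  exact Finset.sum_nonneg fun ω _ => by split <;> simp [hμ0 ω]

lemma pr_congr {μ : Ω → ℝ} {X : Ω → α} {Y : Ω → β} {a : α} {b : β}
    (h : ∀ ω, X ω = a ↔ Y ω = b) : pr μ X a = pr μ Y b := by
  unfold pr
  exact Finset.sum_congr rfl fun ω _ => if_congr (h ω) rfl rfl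

lemma pr_mono {μ : Ω → ℝ} (hμ0 : ∀ ω, 0 ≤ μ ω) {X : Ω → α} {Y : Ω → β} {a : α} {b : β}
    (h : ∀ ω, X ω = a → Y ω = b) : pr μ X a ≤ pr μ Y b := by
  unfold pr
  apply Finset.sum_le_sum; intro ω _
  by_cases hx : X ω = a
  · simp [hx, h ω hx]
  · simp only [if_neg hx]; split <;> [exact hμ0 ω; exact le_refl 0]

lemma pr_eq_zero {μ : Ω → ℝ} {X : Ω → α} {a : α} (ha : a ∉ Finset.univ.image X) :
    pr μ X a = 0 := by
  unfold pr
  apply Finset.sum_eq_zero; intro ω _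
  have : X ω ≠ a := fun h => ha (Finset.mem_image.2 ⟨ω, Finset.mem_univ ω, h⟩)
  simp [this]

lemma sum_pr (μ : Ω → ℝ) (hμ1 : ∑ ω, μ ω = 1) (X : Ω → α) {s : Finset α}
    (hs : ∀ ω, X ω ∈ s) : ∑ a ∈ s, pr μ X a = 1 := by
  unfold pr
  rw [Finset.sum_comm]
  have : ∀ ω : Ω, ∑ a ∈ s, (if X ω = a then μ ω else 0) = μ ω := by
    intro ω
    have hmem : X ω ∈ s := hs ω
    rw [show (∑ a ∈ s, if X ω = a then μ ω else 0)
        = (∑ a ∈ s, if a = X ω then μ ω else 0) from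
      Finset.sum_congr rfl fun a _ => if_congr eq_comm rfl rfl]
    rw [Finset.sum_ite_eq' s (X ω) (fun _ => μ ω)]
    simp [hmem]
  simp only [this, hμ1]

lemma entropy_eq_sum (μ : Ω → ℝ) (X : Ω → α) {s : Finset α}
    (hs : ∀ ω, X ω ∈ s) :
    entropy μ X = ∑ a ∈ s, Real.negMulLog (pr μ X a) := by
  unfold entropy
  refine Finset.sum_subset ?_ ?_
  · intro a ha
    rw [Finset.mem_image] at ha
    obtain ⟨ω, -, rfl⟩ := ha
    exact hs ω
  · intro a _ ha
    rw [pr_eq_zero ha, Real.negMulLog_zero]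

lemma pr_comp (μ : Ω → ℝ) (X : Ω → α) (g : α → β) {s : Finset α}
    (hs : ∀ ω, X ω ∈ s) (b : β) :
    pr μ (fun ω => g (X ω)) b = ∑ a ∈ s, if g a = b then pr μ X a else 0 := by
  unfold pr
  have : ∀ a, (if g a = b then (∑ ω : Ω, if X ω = a then μ ω else 0) else 0)
      = ∑ ω : Ω, if a = X ω ∧ g a = b then μ ω else 0 := by
    intro a
    by_cases h : g a = b
    · rw [if_pos h]
      exact Finset.sum_congr rfl fun ω _ => if_congr (by
        constructor
        · intro hx; exact ⟨hx.symm, h⟩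
        · intro hx; exact hx.1.symm) rfl rfl
    · rw [if_neg h]
      symm; apply Finset.sum_eq_zero; intro ω _
      simp [h]
  simp only [this]
  rw [Finset.sum_comm]
  refine Finset.sum_congr rfl fun ω _ => ?_
  rw [show (∑ a ∈ s, if a = X ω ∧ g a = b then μ ω else 0)
      = ∑ a ∈ s, if a = X ω then (if g a = b then μ ω else 0) else 0 from
    Finset.sum_congr rfl fun a _ => by split_ifs <;> simp_all]
  rw [Finset.sum_ite_eq' s (X ω) (fun a => if g a = b then μ ω else 0)]
  simp [hs ω]

lemma pr_marg_right (μ : Ω → ℝ) (W : Ω → α) (V : Ω → β) {t : Finset β}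
    (ht : ∀ ω, V ω ∈ t) (a : α) :
    pr μ W a = ∑ b ∈ t, pr μ (fun ω => (W ω, V ω)) (a, b) := by
  unfold pr
  rw [Finset.sum_comm]
  refine Finset.sum_congr rfl fun ω _ => ?_
  simp only [Prod.mk.injEq]
  rw [show (∑ b ∈ t, if W ω = a ∧ V ω = b then μ ω else 0)
      = ∑ b ∈ t, if b = V ω then (if W ω = a then μ ω else 0) else 0 from
    Finset.sum_congr rfl fun b _ => by
      by_cases h2 : V ω = b
      · subst h2; simp
      · rw [if_neg (fun h => h2 h.2), if_neg (fun h => h2 h.symm)]]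
  rw [Finset.sum_ite_eq' t (V ω) (fun _ => if W ω = a then μ ω else 0)]
  simp [ht ω]

lemma pr_marg_left (μ : Ω → ℝ) (W : Ω → α) (V : Ω → β) {t : Finset β}
    (ht : ∀ ω, V ω ∈ t) (a : α) :
    pr μ W a = ∑ b ∈ t, pr μ (fun ω => (V ω, W ω)) (b, a) := by
  rw [pr_marg_right μ W V ht a]
  exact Finset.sum_congr rfl fun b _ => pr_congr fun ω => by
    rw [Prod.ext_iff, Prod.ext_iff]; tauto

lemma pr_comp_inj (μ : Ω → ℝ) (X : Ω → α) {g : α → β} (hg : Function.Injective g) (a : α) :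
    pr μ (fun ω => g (X ω)) (g a) = pr μ X a :=
  pr_congr fun ω => by simp [hg.eq_iff]

lemma entropy_comp_inj (μ : Ω → ℝ) (X : Ω → α) {g : α → β} (hg : Function.Injective g) :
    entropy μ (fun ω => g (X ω)) = entropy μ X := by
  unfold entropy
  have himg : Finset.univ.image (fun ω => g (X ω)) = (Finset.univ.image X).image g := by
    ext b; simp [Finset.mem_image]
  rw [himg, Finset.sum_image (fun x _ y _ h => hg h)]
  exact Finset.sum_congr rfl fun a _ => by rw [pr_comp_inj μ X hg]

lemma entropy_congr {μ : Ω → ℝ} {ν : Ω' → ℝ} {X : Ω → α} {Y : Ω' → α}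
    (h : ∀ a, pr μ X a = pr ν Y a) : entropy μ X = entropy ν Y := by
  rw [entropy_eq_sum μ X (s := Finset.univ.image X ∪ Finset.univ.image Y)
      (fun ω => Finset.mem_union_left _ (Finset.mem_image_of_mem X (Finset.mem_univ ω))),
    entropy_eq_sum ν Y (s := Finset.univ.image X ∪ Finset.univ.image Y)
      (fun ω => Finset.mem_union_right _ (Finset.mem_image_of_mem Y (Finset.mem_univ ω)))]
  exact Finset.sum_congr rfl fun a _ => by rw [h]

lemma pr_comp_congr {μ : Ω → ℝ} {ν : Ω' → ℝ} {X : Ω → α} {Y : Ω' → α}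
    (h : ∀ a, pr μ X a = pr ν Y a) (g : α → β) (b : β) :
    pr μ (fun ω => g (X ω)) b = pr ν (fun ω => g (Y ω)) b := by
  rw [pr_comp μ X g (s := Finset.univ.image X ∪ Finset.univ.image Y)
      (fun ω => Finset.mem_union_left _ (Finset.mem_image_of_mem X (Finset.mem_univ ω))) b,
    pr_comp ν Y g (s := Finset.univ.image X ∪ Finset.univ.image Y)
      (fun ω => Finset.mem_union_right _ (Finset.mem_image_of_mem Y (Finset.mem_univ ω))) b]
  exact Finset.sum_congr rfl fun a _ => by rw [h]

lemma entropy_comp_congr {μ : Ω → ℝ} {ν : Ω' → ℝ} {X : Ω → α} {Y : Ω' → α}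
    (h : ∀ a, pr μ X a = pr ν Y a) (g : α → β) :
    entropy μ (fun ω => g (X ω)) = entropy ν (fun ω => g (Y ω)) :=
  entropy_congr (pr_comp_congr h g)


lemma entropy_pair_of_indep (μ : Ω → ℝ) (hμ1 : ∑ ω, μ ω = 1)
    (X : Ω → α) (Y : Ω → β)
    (h : ∀ a b, pr μ (fun ω => (X ω, Y ω)) (a, b) = pr μ X a * pr μ Y b) :
    entropy μ (fun ω => (X ω, Y ω)) = entropy μ X + entropy μ Y := by
  classical
  rw [entropy_eq_sum μ _ (s := (Finset.univ.image X) ×ˢ (Finset.univ.image Y))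
      (fun ω => Finset.mem_product.2
        ⟨Finset.mem_image_of_mem X (Finset.mem_univ ω),
         Finset.mem_image_of_mem Y (Finset.mem_univ ω)⟩),
    Finset.sum_product]
  simp only [h, Real.negMulLog_mul]
  rw [Finset.sum_congr rfl (fun a _ => Finset.sum_add_distrib), Finset.sum_add_distrib]
  have hX := fun (ω : Ω) => Finset.mem_image_of_mem X (Finset.mem_univ ω)
  have hY := fun (ω : Ω) => Finset.mem_image_of_mem Y (Finset.mem_univ ω)
  have e1 : ∑ a ∈ Finset.univ.image X, ∑ b ∈ Finset.univ.image Y,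
      pr μ Y b * Real.negMulLog (pr μ X a) = entropy μ X := by
    rw [entropy_eq_sum μ X (s := Finset.univ.image X) hX]
    refine Finset.sum_congr rfl fun a _ => ?_
    rw [← Finset.sum_mul, sum_pr μ hμ1 Y hY, one_mul]
  have e2 : ∑ a ∈ Finset.univ.image X, ∑ b ∈ Finset.univ.image Y,
      pr μ X a * Real.negMulLog (pr μ Y b) = entropy μ Y := by
    rw [entropy_eq_sum μ Y (s := Finset.univ.image Y) hY]
    rw [← Finset.sum_comm]
    refine Finset.sum_congr rfl fun b _ => ?_
    rw [← Finset.sum_mul, sum_pr μ hμ1 X hX, one_mul]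
  rw [e1, e2]

lemma pr_comp_indep (μ : Ω → ℝ) (W : Ω → α) (Z : Ω → β) (u : α → γ) (v : β → δ)
    (h : ∀ a b, pr μ (fun ω => (W ω, Z ω)) (a, b) = pr μ W a * pr μ Z b) (x : γ) (y : δ) :
    pr μ (fun ω => (u (W ω), v (Z ω))) (x, y)
      = pr μ (fun ω => u (W ω)) x * pr μ (fun ω => v (Z ω)) y := by
  classical
  have hWZ : ∀ ω : Ω, (W ω, Z ω) ∈ (Finset.univ.image W) ×ˢ (Finset.univ.image Z) :=
    fun ω => Finset.mem_product.2
      ⟨Finset.mem_image_of_mem W (Finset.mem_univ ω),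
       Finset.mem_image_of_mem Z (Finset.mem_univ ω)⟩
  have key := pr_comp μ (fun ω => (W ω, Z ω)) (fun p => (u p.1, v p.2)) hWZ (x, y)
  rw [show (fun ω => (u (W ω), v (Z ω)))
      = (fun ω => ((fun p : α × β => (u p.1, v p.2)) ((fun ω => (W ω, Z ω)) ω))) from rfl, key,
    Finset.sum_product]
  rw [pr_comp μ W u (s := Finset.univ.image W)
      (fun ω => Finset.mem_image_of_mem W (Finset.mem_univ ω)) x,
    pr_comp μ Z v (s := Finset.univ.image Z)
      (fun ω => Finset.mem_image_of_mem Z (Finset.mem_univ ω)) y,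
    Finset.sum_mul_sum]
  refine Finset.sum_congr rfl fun a _ => Finset.sum_congr rfl fun b _ => ?_
  rw [h a b, Prod.mk.injEq]
  by_cases h1 : u a = x <;> by_cases h2 : v b = y <;> simp [h1, h2]

lemma ssa (μ : Ω → ℝ) (hμ0 : ∀ ω, 0 ≤ μ ω) (hμ1 : ∑ ω, μ ω = 1)
    (X : Ω → α) (Y : Ω → β) (Z : Ω → γ) :
    entropy μ (fun ω => (X ω, Y ω, Z ω)) + entropy μ Y
      ≤ entropy μ (fun ω => (X ω, Y ω)) + entropy μ (fun ω => (Y ω, Z ω)) := by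
  classical
  set s := Finset.univ.image X with hsdef
  set t := Finset.univ.image Y with htdef
  set u := Finset.univ.image Z with hudef
  have hsm : ∀ ω, X ω ∈ s := fun ω => Finset.mem_image_of_mem X (Finset.mem_univ ω)
  have htm : ∀ ω, Y ω ∈ t := fun ω => Finset.mem_image_of_mem Y (Finset.mem_univ ω)
  have hum : ∀ ω, Z ω ∈ u := fun ω => Finset.mem_image_of_mem Z (Finset.mem_univ ω)
  -- marginals
  have f1 : ∀ a b, pr μ (fun ω => (X ω, Y ω)) (a, b)
      = ∑ c ∈ u, pr μ (fun ω => (X ω, Y ω, Z ω)) (a, b, c) := by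
    intro a b
    rw [pr_marg_right μ (fun ω => (X ω, Y ω)) Z hum (a, b)]
    exact Finset.sum_congr rfl fun c _ => pr_congr fun ω => by
      simp only [Prod.mk.injEq]; tauto
  have f2 : ∀ b c, pr μ (fun ω => (Y ω, Z ω)) (b, c)
      = ∑ a ∈ s, pr μ (fun ω => (X ω, Y ω, Z ω)) (a, b, c) := by
    intro b c
    rw [pr_marg_left μ (fun ω => (Y ω, Z ω)) X hsm (b, c)]
  have f3 : ∀ b, pr μ Y b = ∑ a ∈ s, pr μ (fun ω => (X ω, Y ω)) (a, b) :=
    fun b => pr_marg_left μ Y X hsm b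
  have f4 : ∀ b, pr μ Y b = ∑ c ∈ u, pr μ (fun ω => (Y ω, Z ω)) (b, c) :=
    fun b => pr_marg_right μ Y Z hum b
  -- monotonicity and nonnegativity
  have m1 : ∀ a b c, pr μ (fun ω => (X ω, Y ω, Z ω)) (a, b, c)
      ≤ pr μ (fun ω => (X ω, Y ω)) (a, b) := fun a b c =>
    pr_mono hμ0 fun ω h => by simp only [Prod.mk.injEq] at *; tauto
  have m2 : ∀ a b c, pr μ (fun ω => (X ω, Y ω, Z ω)) (a, b, c)
      ≤ pr μ (fun ω => (Y ω, Z ω)) (b, c) := fun a b c =>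
    pr_mono hμ0 fun ω h => by simp only [Prod.mk.injEq] at *; tauto
  have m3 : ∀ a b, pr μ (fun ω => (X ω, Y ω)) (a, b) ≤ pr μ Y b := fun a b =>
    pr_mono hμ0 fun ω h => by simp only [Prod.mk.injEq] at *; tauto
  have n0 : ∀ a b c, 0 ≤ pr μ (fun ω => (X ω, Y ω, Z ω)) (a, b, c) :=
    fun a b c => pr_nonneg μ hμ0 _ _
  have nxy : ∀ a b, 0 ≤ pr μ (fun ω => (X ω, Y ω)) (a, b) := fun a b => pr_nonneg μ hμ0 _ _
  have nyz : ∀ b c, 0 ≤ pr μ (fun ω => (Y ω, Z ω)) (b, c) := fun b c => pr_nonneg μ hμ0 _ _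
  have ny : ∀ b, 0 ≤ pr μ Y b := fun b => pr_nonneg μ hμ0 _ _
  -- total mass one
  have T : ∑ a ∈ s, ∑ b ∈ t, ∑ c ∈ u, pr μ (fun ω => (X ω, Y ω, Z ω)) (a, b, c) = 1 := by
    have := sum_pr μ hμ1 (fun ω => (X ω, Y ω, Z ω)) (s := s ×ˢ t ×ˢ u)
      (fun ω => Finset.mem_product.2 ⟨hsm ω, Finset.mem_product.2 ⟨htm ω, hum ω⟩⟩)
    rw [Finset.sum_product] at this
    calc ∑ a ∈ s, ∑ b ∈ t, ∑ c ∈ u, pr μ (fun ω => (X ω, Y ω, Z ω)) (a, b, c)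
        = ∑ a ∈ s, ∑ bc ∈ t ×ˢ u, pr μ (fun ω => (X ω, Y ω, Z ω)) (a, bc) :=
          Finset.sum_congr rfl fun a _ =>
            (Finset.sum_product t u (fun bc => pr μ (fun ω => (X ω, Y ω, Z ω)) (a, bc))).symm
      _ = 1 := this
  -- sum of q equals one
  have Q : ∑ a ∈ s, ∑ b ∈ t, ∑ c ∈ u,
      (if pr μ Y b = 0 then 0 else
        pr μ (fun ω => (X ω, Y ω)) (a, b) * pr μ (fun ω => (Y ω, Z ω)) (b, c) / pr μ Y b)
      = 1 := by
    have inner : ∀ a b, ∑ c ∈ u, (if pr μ Y b = 0 then 0 else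
        pr μ (fun ω => (X ω, Y ω)) (a, b) * pr μ (fun ω => (Y ω, Z ω)) (b, c) / pr μ Y b)
        = if pr μ Y b = 0 then 0 else pr μ (fun ω => (X ω, Y ω)) (a, b) := by
      intro a b
      by_cases hy : pr μ Y b = 0
      · simp [hy]
      · simp only [if_neg hy]
        rw [show (∑ c ∈ u, pr μ (fun ω => (X ω, Y ω)) (a, b)
              * pr μ (fun ω => (Y ω, Z ω)) (b, c) / pr μ Y b)
            = (∑ c ∈ u, pr μ (fun ω => (Y ω, Z ω)) (b, c))
              * (pr μ (fun ω => (X ω, Y ω)) (a, b) / pr μ Y b) from by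
          rw [Finset.sum_mul]; exact Finset.sum_congr rfl fun c _ => by ring]
        rw [← f4 b]
        field_simp
    simp only [inner]
    rw [Finset.sum_comm]
    have innb : ∀ b, ∑ a ∈ s, (if pr μ Y b = 0 then 0 else pr μ (fun ω => (X ω, Y ω)) (a, b))
        = pr μ Y b := by
      intro b
      by_cases hy : pr μ Y b = 0
      · simp [hy]
      · simp only [if_neg hy]
        exact (f3 b).symm
    simp only [innb]
    exact sum_pr μ hμ1 Y htm
  -- termwise bound
  have bnd : ∀ a b c,
      Real.negMulLog (pr μ (fun ω => (X ω, Y ω, Z ω)) (a, b, c))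
        + pr μ (fun ω => (X ω, Y ω, Z ω)) (a, b, c) * Real.log (pr μ (fun ω => (X ω, Y ω)) (a, b))
        + pr μ (fun ω => (X ω, Y ω, Z ω)) (a, b, c) * Real.log (pr μ (fun ω => (Y ω, Z ω)) (b, c))
        - pr μ (fun ω => (X ω, Y ω, Z ω)) (a, b, c) * Real.log (pr μ Y b)
      ≤ (if pr μ Y b = 0 then 0 else
          pr μ (fun ω => (X ω, Y ω)) (a, b) * pr μ (fun ω => (Y ω, Z ω)) (b, c) / pr μ Y b)
        - pr μ (fun ω => (X ω, Y ω, Z ω)) (a, b, c) := by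
    intro a b c
    by_cases hp : pr μ (fun ω => (X ω, Y ω, Z ω)) (a, b, c) = 0
    · rw [hp]
      simp only [Real.negMulLog_zero, zero_mul, add_zero, sub_zero, sub_zero, zero_add]
      split_ifs with hy
      · norm_num
      · exact div_nonneg (mul_nonneg (nxy a b) (nyz b c)) (ny b)
    · have hp' : 0 < pr μ (fun ω => (X ω, Y ω, Z ω)) (a, b, c) :=
        lt_of_le_of_ne (n0 a b c) (Ne.symm hp)
      have h1 : 0 < pr μ (fun ω => (X ω, Y ω)) (a, b) := lt_of_lt_of_le hp' (m1 a b c)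
      have h2 : 0 < pr μ (fun ω => (Y ω, Z ω)) (b, c) := lt_of_lt_of_le hp' (m2 a b c)
      have h3 : 0 < pr μ Y b := lt_of_lt_of_le h1 (m3 a b)
      rw [if_neg (ne_of_gt h3)]
      have hq : 0 < pr μ (fun ω => (X ω, Y ω)) (a, b) * pr μ (fun ω => (Y ω, Z ω)) (b, c)
          / pr μ Y b := by positivity
      have hlog := Real.log_le_sub_one_of_pos (div_pos hq hp')
      have expand : Real.log ((pr μ (fun ω => (X ω, Y ω)) (a, b)
            * pr μ (fun ω => (Y ω, Z ω)) (b, c) / pr μ Y b)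
            / pr μ (fun ω => (X ω, Y ω, Z ω)) (a, b, c))
          = Real.log (pr μ (fun ω => (X ω, Y ω)) (a, b))
            + Real.log (pr μ (fun ω => (Y ω, Z ω)) (b, c)) - Real.log (pr μ Y b)
            - Real.log (pr μ (fun ω => (X ω, Y ω, Z ω)) (a, b, c)) := by
        rw [Real.log_div (ne_of_gt hq) hp, Real.log_div (ne_of_gt (mul_pos h1 h2)) (ne_of_gt h3),
          Real.log_mul (ne_of_gt h1) (ne_of_gt h2)]
      have lhs_eq :
          Real.negMulLog (pr μ (fun ω => (X ω, Y ω, Z ω)) (a, b, c))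
            + pr μ (fun ω => (X ω, Y ω, Z ω)) (a, b, c)
              * Real.log (pr μ (fun ω => (X ω, Y ω)) (a, b))
            + pr μ (fun ω => (X ω, Y ω, Z ω)) (a, b, c)
              * Real.log (pr μ (fun ω => (Y ω, Z ω)) (b, c))
            - pr μ (fun ω => (X ω, Y ω, Z ω)) (a, b, c) * Real.log (pr μ Y b)
          = pr μ (fun ω => (X ω, Y ω, Z ω)) (a, b, c)
            * Real.log ((pr μ (fun ω => (X ω, Y ω)) (a, b)
              * pr μ (fun ω => (Y ω, Z ω)) (b, c) / pr μ Y b)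
              / pr μ (fun ω => (X ω, Y ω, Z ω)) (a, b, c)) := by
        rw [expand]
        simp only [Real.negMulLog]
        ring
      rw [lhs_eq]
      calc pr μ (fun ω => (X ω, Y ω, Z ω)) (a, b, c)
            * Real.log ((pr μ (fun ω => (X ω, Y ω)) (a, b)
              * pr μ (fun ω => (Y ω, Z ω)) (b, c) / pr μ Y b)
              / pr μ (fun ω => (X ω, Y ω, Z ω)) (a, b, c))
          ≤ pr μ (fun ω => (X ω, Y ω, Z ω)) (a, b, c)
            * ((pr μ (fun ω => (X ω, Y ω)) (a, b)
              * pr μ (fun ω => (Y ω, Z ω)) (b, c) / pr μ Y b)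
              / pr μ (fun ω => (X ω, Y ω, Z ω)) (a, b, c) - 1) :=
            mul_le_mul_of_nonneg_left hlog (le_of_lt hp')
        _ = pr μ (fun ω => (X ω, Y ω)) (a, b) * pr μ (fun ω => (Y ω, Z ω)) (b, c) / pr μ Y b
            - pr μ (fun ω => (X ω, Y ω, Z ω)) (a, b, c) := by
            field_simp
  -- summed bound
  have key : ∑ a ∈ s, ∑ b ∈ t, ∑ c ∈ u,
      (Real.negMulLog (pr μ (fun ω => (X ω, Y ω, Z ω)) (a, b, c))
        + pr μ (fun ω => (X ω, Y ω, Z ω)) (a, b, c) * Real.log (pr μ (fun ω => (X ω, Y ω)) (a, b))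
        + pr μ (fun ω => (X ω, Y ω, Z ω)) (a, b, c) * Real.log (pr μ (fun ω => (Y ω, Z ω)) (b, c))
        - pr μ (fun ω => (X ω, Y ω, Z ω)) (a, b, c) * Real.log (pr μ Y b)) ≤ 0 := by
    have step : ∑ a ∈ s, ∑ b ∈ t, ∑ c ∈ u,
        (Real.negMulLog (pr μ (fun ω => (X ω, Y ω, Z ω)) (a, b, c))
          + pr μ (fun ω => (X ω, Y ω, Z ω)) (a, b, c) * Real.log (pr μ (fun ω => (X ω, Y ω)) (a, b))
          + pr μ (fun ω => (X ω, Y ω, Z ω)) (a, b, c) * Real.log (pr μ (fun ω => (Y ω, Z ω)) (b, c))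
          - pr μ (fun ω => (X ω, Y ω, Z ω)) (a, b, c) * Real.log (pr μ Y b))
        ≤ ∑ a ∈ s, ∑ b ∈ t, ∑ c ∈ u,
          ((if pr μ Y b = 0 then 0 else
            pr μ (fun ω => (X ω, Y ω)) (a, b) * pr μ (fun ω => (Y ω, Z ω)) (b, c) / pr μ Y b)
            - pr μ (fun ω => (X ω, Y ω, Z ω)) (a, b, c)) :=
      Finset.sum_le_sum fun a _ => Finset.sum_le_sum fun b _ => Finset.sum_le_sum fun c _ =>
        bnd a b c
    refine le_trans step ?_
    rw [show (∑ a ∈ s, ∑ b ∈ t, ∑ c ∈ u,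
        ((if pr μ Y b = 0 then 0 else
          pr μ (fun ω => (X ω, Y ω)) (a, b) * pr μ (fun ω => (Y ω, Z ω)) (b, c) / pr μ Y b)
          - pr μ (fun ω => (X ω, Y ω, Z ω)) (a, b, c)))
        = (∑ a ∈ s, ∑ b ∈ t, ∑ c ∈ u,
          (if pr μ Y b = 0 then 0 else
            pr μ (fun ω => (X ω, Y ω)) (a, b) * pr μ (fun ω => (Y ω, Z ω)) (b, c) / pr μ Y b))
          - ∑ a ∈ s, ∑ b ∈ t, ∑ c ∈ u, pr μ (fun ω => (X ω, Y ω, Z ω)) (a, b, c) from by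
      simp [Finset.sum_sub_distrib]]
    rw [Q, T]
    norm_num
  -- identities
  have idA : entropy μ (fun ω => (X ω, Y ω, Z ω))
      = ∑ a ∈ s, ∑ b ∈ t, ∑ c ∈ u,
        Real.negMulLog (pr μ (fun ω => (X ω, Y ω, Z ω)) (a, b, c)) := by
    rw [entropy_eq_sum μ _ (s := s ×ˢ t ×ˢ u)
      (fun ω => Finset.mem_product.2 ⟨hsm ω, Finset.mem_product.2 ⟨htm ω, hum ω⟩⟩),
      Finset.sum_product]
    exact Finset.sum_congr rfl fun a _ =>
      Finset.sum_product t u (fun bc => Real.negMulLog (pr μ (fun ω => (X ω, Y ω, Z ω)) (a, bc)))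
  have idB : ∑ a ∈ s, ∑ b ∈ t, ∑ c ∈ u,
      pr μ (fun ω => (X ω, Y ω, Z ω)) (a, b, c) * Real.log (pr μ (fun ω => (X ω, Y ω)) (a, b))
      = -entropy μ (fun ω => (X ω, Y ω)) := by
    have inner : ∀ a b, ∑ c ∈ u,
        pr μ (fun ω => (X ω, Y ω, Z ω)) (a, b, c) * Real.log (pr μ (fun ω => (X ω, Y ω)) (a, b))
        = -Real.negMulLog (pr μ (fun ω => (X ω, Y ω)) (a, b)) := by
      intro a b
      rw [← Finset.sum_mul, ← f1 a b]
      simp [Real.negMulLog]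
    simp only [inner]
    rw [entropy_eq_sum μ _ (s := s ×ˢ t)
      (fun ω => Finset.mem_product.2 ⟨hsm ω, htm ω⟩), Finset.sum_product]
    simp [Finset.sum_neg_distrib]
  have idC : ∑ a ∈ s, ∑ b ∈ t, ∑ c ∈ u,
      pr μ (fun ω => (X ω, Y ω, Z ω)) (a, b, c) * Real.log (pr μ (fun ω => (Y ω, Z ω)) (b, c))
      = -entropy μ (fun ω => (Y ω, Z ω)) := by
    rw [Finset.sum_comm]
    rw [Finset.sum_congr rfl (fun b _ => Finset.sum_comm (s := s) (t := u))]
    have inner : ∀ b c, ∑ a ∈ s,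
        pr μ (fun ω => (X ω, Y ω, Z ω)) (a, b, c) * Real.log (pr μ (fun ω => (Y ω, Z ω)) (b, c))
        = -Real.negMulLog (pr μ (fun ω => (Y ω, Z ω)) (b, c)) := by
      intro b c
      rw [← Finset.sum_mul, ← f2 b c]
      simp [Real.negMulLog]
    simp only [inner]
    rw [entropy_eq_sum μ _ (s := t ×ˢ u)
      (fun ω => Finset.mem_product.2 ⟨htm ω, hum ω⟩), Finset.sum_product]
    simp [Finset.sum_neg_distrib]
  have idD : ∑ a ∈ s, ∑ b ∈ t, ∑ c ∈ u,
      pr μ (fun ω => (X ω, Y ω, Z ω)) (a, b, c) * Real.log (pr μ Y b)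
      = -entropy μ Y := by
    have inner : ∀ a b, ∑ c ∈ u,
        pr μ (fun ω => (X ω, Y ω, Z ω)) (a, b, c) * Real.log (pr μ Y b)
        = pr μ (fun ω => (X ω, Y ω)) (a, b) * Real.log (pr μ Y b) := by
      intro a b
      rw [← Finset.sum_mul, ← f1 a b]
    simp only [inner]
    rw [Finset.sum_comm]
    have inner2 : ∀ b, ∑ a ∈ s,
        pr μ (fun ω => (X ω, Y ω)) (a, b) * Real.log (pr μ Y b)
        = -Real.negMulLog (pr μ Y b) := by
      intro b
      rw [← Finset.sum_mul, ← f3 b]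
      simp [Real.negMulLog]
    simp only [inner2]
    rw [entropy_eq_sum μ Y htm]
    simp [Finset.sum_neg_distrib]
  -- combine
  have split : ∑ a ∈ s, ∑ b ∈ t, ∑ c ∈ u,
      (Real.negMulLog (pr μ (fun ω => (X ω, Y ω, Z ω)) (a, b, c))
        + pr μ (fun ω => (X ω, Y ω, Z ω)) (a, b, c) * Real.log (pr μ (fun ω => (X ω, Y ω)) (a, b))
        + pr μ (fun ω => (X ω, Y ω, Z ω)) (a, b, c) * Real.log (pr μ (fun ω => (Y ω, Z ω)) (b, c))
        - pr μ (fun ω => (X ω, Y ω, Z ω)) (a, b, c) * Real.log (pr μ Y b))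
      = (∑ a ∈ s, ∑ b ∈ t, ∑ c ∈ u,
          Real.negMulLog (pr μ (fun ω => (X ω, Y ω, Z ω)) (a, b, c)))
        + (∑ a ∈ s, ∑ b ∈ t, ∑ c ∈ u,
          pr μ (fun ω => (X ω, Y ω, Z ω)) (a, b, c) * Real.log (pr μ (fun ω => (X ω, Y ω)) (a, b)))
        + (∑ a ∈ s, ∑ b ∈ t, ∑ c ∈ u,
          pr μ (fun ω => (X ω, Y ω, Z ω)) (a, b, c) * Real.log (pr μ (fun ω => (Y ω, Z ω)) (b, c)))
        - (∑ a ∈ s, ∑ b ∈ t, ∑ c ∈ u,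
          pr μ (fun ω => (X ω, Y ω, Z ω)) (a, b, c) * Real.log (pr μ Y b)) := by
    simp [Finset.sum_add_distrib, Finset.sum_sub_distrib]
  rw [split, ← idA, idB, idC, idD] at key
  linarith

lemma entropy_unit (μ : Ω → ℝ) (hμ1 : ∑ ω, μ ω = 1) :
    entropy μ (fun _ => (() : Unit)) = 0 := by
  rw [entropy_eq_sum μ _ (s := {()}) (fun ω => Finset.mem_singleton_self _),
    Finset.sum_singleton]
  have h1 : pr μ (fun _ : Ω => ()) () = 1 := by
    unfold pr; simpa using hμ1
  rw [h1]
  simp [Real.negMulLog]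

lemma entropy_pair_le (μ : Ω → ℝ) (hμ0 : ∀ ω, 0 ≤ μ ω) (hμ1 : ∑ ω, μ ω = 1)
    (X : Ω → α) (Y : Ω → β) :
    entropy μ (fun ω => (X ω, Y ω)) ≤ entropy μ X + entropy μ Y := by
  have h := ssa μ hμ0 hμ1 X (fun _ => (() : Unit)) Y
  have e0 := entropy_unit μ hμ1
  have e1 : entropy μ (fun ω => (X ω, (), Y ω)) = entropy μ (fun ω => (X ω, Y ω)) :=
    entropy_comp_inj (g := fun p : α × β => (p.1, (), p.2)) μ (fun ω => (X ω, Y ω))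
      (fun p q hpq => by
        obtain ⟨h1, -, h2⟩ : p.1 = q.1 ∧ (() : Unit) = () ∧ p.2 = q.2 := by
          simpa [Prod.ext_iff] using hpq
        exact Prod.ext h1 h2)
  have e2 : entropy μ (fun ω => (X ω, ())) = entropy μ X :=
    entropy_comp_inj (g := fun x : α => (x, ())) μ X
      (fun x y hxy => by simpa [Prod.ext_iff] using hxy)
  have e3 : entropy μ (fun ω => ((), Y ω)) = entropy μ Y :=
    entropy_comp_inj (g := fun y : β => ((), y)) μ Y
      (fun x y hxy => by simpa [Prod.ext_iff] using hxy)
  rw [e1, e2, e3, e0] at h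
  linarith

lemma entropy_le_entropy_add (μ : Ω → ℝ) (hμ0 : ∀ ω, 0 ≤ μ ω) (hμ1 : ∑ ω, μ ω = 1)
    (W Z : Ω → ℝ)
    (h : ∀ a b, pr μ (fun ω => (W ω, Z ω)) (a, b) = pr μ W a * pr μ Z b) :
    entropy μ W ≤ entropy μ (fun ω => W ω + Z ω) := by
  have e1 : entropy μ (fun ω => (W ω + Z ω, Z ω)) = entropy μ (fun ω => (W ω, Z ω)) :=
    entropy_comp_inj (g := fun p : ℝ × ℝ => (p.1 + p.2, p.2)) μ (fun ω => (W ω, Z ω))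
      (fun p q hpq => by
        obtain ⟨h1, h2⟩ : p.1 + p.2 = q.1 + q.2 ∧ p.2 = q.2 := by
          simpa [Prod.ext_iff] using hpq
        exact Prod.ext (by linarith) h2)
  have e2 := entropy_pair_of_indep μ hμ1 W Z h
  have e3 := entropy_pair_le μ hμ0 hμ1 (fun ω => W ω + Z ω) Z
  linarith

-- Product space lemmas
lemma pr_fst (μ : Ω → ℝ) (hμ1 : ∑ ω, μ ω = 1) (F : Ω → α) (a : α) :
    pr (fun p : Ω × Ω => μ p.1 * μ p.2) (fun p => F p.1) a = pr μ F a := by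
  unfold pr
  rw [Fintype.sum_prod_type]
  refine Finset.sum_congr rfl fun ω1 _ => ?_
  dsimp only
  by_cases h : F ω1 = a
  · simp only [h, if_pos rfl, if_true, ← Finset.mul_sum, hμ1, mul_one]
  · simp [h]

lemma pr_snd (μ : Ω → ℝ) (hμ1 : ∑ ω, μ ω = 1) (F : Ω → α) (a : α) :
    pr (fun p : Ω × Ω => μ p.1 * μ p.2) (fun p => F p.2) a = pr μ F a := by
  unfold pr
  rw [Fintype.sum_prod_type_right]
  refine Finset.sum_congr rfl fun ω2 _ => ?_
  dsimp only
  by_cases h : F ω2 = a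
  · simp only [h, if_pos rfl, if_true, ← Finset.sum_mul, hμ1, one_mul]
  · simp [h]

lemma pr_prodmk (μ : Ω → ℝ) (F : Ω → α) (G : Ω → β) (a : α) (b : β) :
    pr (fun p : Ω × Ω => μ p.1 * μ p.2) (fun p => (F p.1, G p.2)) (a, b)
      = pr μ F a * pr μ G b := by
  unfold pr
  rw [Fintype.sum_prod_type, Finset.sum_mul_sum]
  refine Finset.sum_congr rfl fun ω1 _ => Finset.sum_congr rfl fun ω2 _ => ?_
  dsimp only
  by_cases h1 : F ω1 = a <;> by_cases h2 : G ω2 = b <;> simp [h1, h2, Prod.ext_iff]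

lemma pr_prod13 (μ : Ω → ℝ) (F : Ω → α) (G : Ω → β) (K : Ω → γ) (a : α) (b : β) (c : γ) :
    pr (fun p : Ω × Ω => μ p.1 * μ p.2) (fun p => (F p.1, (G p.1, K p.2))) (a, (b, c))
      = pr μ (fun ω => (F ω, G ω)) (a, b) * pr μ K c := by
  unfold pr
  rw [Fintype.sum_prod_type, Finset.sum_mul_sum]
  refine Finset.sum_congr rfl fun ω1 _ => Finset.sum_congr rfl fun ω2 _ => ?_
  dsimp only
  by_cases h1 : F ω1 = a <;> by_cases h2 : G ω1 = b <;> by_cases h3 : K ω2 = c <;>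
    simp [h1, h2, h3, Prod.ext_iff]

lemma pr_prod13' (μ : Ω → ℝ) (F : Ω → α) (G : Ω → β) (K : Ω → γ) (a : α) (b : β) (c : γ) :
    pr (fun p : Ω × Ω => μ p.1 * μ p.2) (fun p => ((F p.1, K p.2), G p.1)) ((a, c), b)
      = pr μ (fun ω => (F ω, G ω)) (a, b) * pr μ K c := by
  unfold pr
  rw [Fintype.sum_prod_type, Finset.sum_mul_sum]
  refine Finset.sum_congr rfl fun ω1 _ => Finset.sum_congr rfl fun ω2 _ => ?_
  dsimp only
  by_cases h1 : F ω1 = a <;> by_cases h2 : G ω1 = b <;> by_cases h3 : K ω2 = c <;>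
    simp [h1, h2, h3, Prod.ext_iff]

end Aux

/-- For i.i.d. finitely supported real random variables `X1, X2`:
`(1/2)·I(X1 − X2; X2) ≤ I(X1 + X2; X2) ≤ 2·I(X1 − X2; X2)`; equivalently
`1/2 ≤ (H(X1+X2) − H(X1)) / (H(X1−X2) − H(X1)) ≤ 2` when the denominator is nonzero. -/
theorem iid_sum_difference_entropy {Ω : Type*} [Fintype Ω] (μ : Ω → ℝ)
    (hμ0 : ∀ ω, 0 ≤ μ ω) (hμ1 : ∑ ω, μ ω = 1)
    (X1 X2 : Ω → ℝ)
    (hid : ∀ x : ℝ, pr μ X1 x = pr μ X2 x)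
    (hindep : ∀ a b : ℝ, pr μ (fun ω => (X1 ω, X2 ω)) (a, b) = pr μ X1 a * pr μ X2 b) :
    ((1 / 2) * mutualInfo μ (fun ω => X1 ω - X2 ω) X2
        ≤ mutualInfo μ (fun ω => X1 ω + X2 ω) X2 ∧
      mutualInfo μ (fun ω => X1 ω + X2 ω) X2
        ≤ 2 * mutualInfo μ (fun ω => X1 ω - X2 ω) X2) ∧
    (entropy μ (fun ω => X1 ω - X2 ω) - entropy μ X1 ≠ 0 →
      1 / 2 ≤ (entropy μ (fun ω => X1 ω + X2 ω) - entropy μ X1) /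
          (entropy μ (fun ω => X1 ω - X2 ω) - entropy μ X1) ∧
        (entropy μ (fun ω => X1 ω + X2 ω) - entropy μ X1) /
          (entropy μ (fun ω => X1 ω - X2 ω) - entropy μ X1) ≤ 2) := by
  classical
  -- basic injectivity facts
  have injadd : Function.Injective (fun q : ℝ × ℝ => (q.1 + q.2, q.2)) := by
    intro p q hpq
    obtain ⟨h1, h2⟩ : p.1 + p.2 = q.1 + q.2 ∧ p.2 = q.2 := by simpa [Prod.ext_iff] using hpq
    exact Prod.ext (by linarith) h2
  have injsub : Function.Injective (fun q : ℝ × ℝ => (q.1 - q.2, q.2)) := by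
    intro p q hpq
    obtain ⟨h1, h2⟩ : p.1 - p.2 = q.1 - q.2 ∧ p.2 = q.2 := by simpa [Prod.ext_iff] using hpq
    exact Prod.ext (by linarith) h2
  have hEX2 : entropy μ X2 = entropy μ X1 :=
    Aux.entropy_congr (fun a => (hid a).symm)
  have hindpair := Aux.entropy_pair_of_indep μ hμ1 X1 X2 hindep
  set hh := entropy μ X1 with hhdef
  set ss := entropy μ (fun ω => X1 ω + X2 ω) with ssdef
  set dd := entropy μ (fun ω => X1 ω - X2 ω) with dddef
  -- mutual information identities
  have mi_sum : mutualInfo μ (fun ω => X1 ω + X2 ω) X2 = ss - hh := by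
    have hpair : entropy μ (fun ω => (X1 ω + X2 ω, X2 ω))
        = entropy μ (fun ω => (X1 ω, X2 ω)) :=
      Aux.entropy_comp_inj (g := fun q : ℝ × ℝ => (q.1 + q.2, q.2)) μ
        (fun ω => (X1 ω, X2 ω)) injadd
    unfold mutualInfo
    rw [show (entropy μ fun ω => ((fun ω => X1 ω + X2 ω) ω, X2 ω))
        = entropy μ (fun ω => (X1 ω + X2 ω, X2 ω)) from rfl, hpair, hindpair, hEX2]
    ring
  have mi_diff : mutualInfo μ (fun ω => X1 ω - X2 ω) X2 = dd - hh := by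
    have hpair : entropy μ (fun ω => (X1 ω - X2 ω, X2 ω))
        = entropy μ (fun ω => (X1 ω, X2 ω)) :=
      Aux.entropy_comp_inj (g := fun q : ℝ × ℝ => (q.1 - q.2, q.2)) μ
        (fun ω => (X1 ω, X2 ω)) injsub
    unfold mutualInfo
    rw [show (entropy μ fun ω => ((fun ω => X1 ω - X2 ω) ω, X2 ω))
        = entropy μ (fun ω => (X1 ω - X2 ω, X2 ω)) from rfl, hpair, hindpair, hEX2]
    ring
  -- H(X1) ≤ H(X1 ± X2)
  have hle_s : hh ≤ ss := by
    rw [ssdef, hhdef]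
    exact Aux.entropy_le_entropy_add μ hμ0 hμ1 X1 X2 hindep
  have hle_d : hh ≤ dd := by
    have hneg : ∀ a b : ℝ, pr μ (fun ω => (X1 ω, -(X2 ω))) (a, b)
        = pr μ X1 a * pr μ (fun ω => -(X2 ω)) b :=
      fun a b => Aux.pr_comp_indep μ X1 X2 id (fun x => -x) hindep a b
    have h1 : entropy μ X1 ≤ entropy μ (fun ω => X1 ω + -(X2 ω)) :=
      Aux.entropy_le_entropy_add μ hμ0 hμ1 X1 (fun ω => -(X2 ω)) hneg
    rw [show (fun ω => X1 ω + -(X2 ω)) = (fun ω => X1 ω - X2 ω) from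
      funext fun ω => by ring] at h1
    exact h1
  -- product space
  set ν : Ω × Ω → ℝ := fun p => μ p.1 * μ p.2 with hνdef
  have hν0 : ∀ p : Ω × Ω, 0 ≤ ν p := fun p => mul_nonneg (hμ0 _) (hμ0 _)
  have hν1 : ∑ p : Ω × Ω, ν p = 1 := by
    rw [hνdef, Fintype.sum_prod_type]
    simp only [← Finset.mul_sum, hμ1, mul_one]
  -- distribution transfers
  have tY1 : ∀ a, pr ν (fun p => X1 p.1) a = pr μ X1 a := Aux.pr_fst μ hμ1 X1
  have tY2 : ∀ a, pr ν (fun p => X2 p.1) a = pr μ X2 a := Aux.pr_fst μ hμ1 X2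
  have tY3 : ∀ a, pr ν (fun p => X1 p.2) a = pr μ X1 a := Aux.pr_snd μ hμ1 X1
  have tP12 : ∀ q : ℝ × ℝ, pr ν (fun p => (X1 p.1, X2 p.1)) q
      = pr μ (fun ω => (X1 ω, X2 ω)) q :=
    Aux.pr_fst μ hμ1 (fun ω => (X1 ω, X2 ω))
  have t13 : ∀ a b : ℝ, pr ν (fun p => (X1 p.1, X1 p.2)) (a, b)
      = pr μ (fun ω => (X1 ω, X2 ω)) (a, b) := by
    intro a b
    rw [Aux.pr_prodmk μ X1 X1 a b, hindep, hid b]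
  have t23 : ∀ a b : ℝ, pr ν (fun p => (X2 p.1, X1 p.2)) (a, b)
      = pr μ (fun ω => (X1 ω, X2 ω)) (a, b) := by
    intro a b
    rw [Aux.pr_prodmk μ X2 X1 a b, hindep, hid a, hid b]
  -- entropy transfers
  have HY1 : entropy ν (fun p => X1 p.1) = hh := Aux.entropy_congr tY1
  have HY2 : entropy ν (fun p => X2 p.1) = hh :=
    (Aux.entropy_congr tY2).trans hEX2
  have HY3 : entropy ν (fun p => X1 p.2) = hh := Aux.entropy_congr tY3
  have HY12 : entropy ν (fun p => (X1 p.1, X2 p.1)) = hh + hh := by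
    rw [hhdef, show entropy μ X1 + entropy μ X1
      = entropy μ X1 + entropy μ X2 from by rw [hEX2], ← hindpair]
    exact Aux.entropy_congr tP12
  have Hs12 : entropy ν (fun p => X1 p.1 + X2 p.1) = ss :=
    Aux.entropy_comp_congr tP12 (fun q : ℝ × ℝ => q.1 + q.2)
  have Hd12 : entropy ν (fun p => X1 p.1 - X2 p.1) = dd :=
    Aux.entropy_comp_congr tP12 (fun q : ℝ × ℝ => q.1 - q.2)
  have Hs13 : entropy ν (fun p => X1 p.1 + X1 p.2) = ss :=
    Aux.entropy_comp_congr (fun q => t13 q.1 q.2) (fun q : ℝ × ℝ => q.1 + q.2)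
  have Hd13 : entropy ν (fun p => X1 p.1 - X1 p.2) = dd :=
    Aux.entropy_comp_congr (fun q => t13 q.1 q.2) (fun q : ℝ × ℝ => q.1 - q.2)
  have Hs23 : entropy ν (fun p => X2 p.1 + X1 p.2) = ss :=
    Aux.entropy_comp_congr (fun q => t23 q.1 q.2) (fun q : ℝ × ℝ => q.1 + q.2)
  have Hd23 : entropy ν (fun p => X2 p.1 - X1 p.2) = dd :=
    Aux.entropy_comp_congr (fun q => t23 q.1 q.2) (fun q : ℝ × ℝ => q.1 - q.2)
  -- joint factorization of ((Y1,Y2),Y3)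
  have factB : ∀ (q : ℝ × ℝ) (c : ℝ),
      pr ν (fun p => ((X1 p.1, X2 p.1), X1 p.2)) (q, c)
        = pr ν (fun p => (X1 p.1, X2 p.1)) q * pr ν (fun p => X1 p.2) c := by
    intro q c
    have h1 : pr ν (fun p => ((X1 p.1, X2 p.1), X1 p.2)) (q, c)
        = pr μ (fun ω => (X1 ω, X2 ω)) q * pr μ X1 c :=
      Aux.pr_prodmk μ (fun ω => (X1 ω, X2 ω)) X1 q c
    rw [h1, ← tP12 q, ← tY3 c]
  have HB : entropy ν (fun p => ((X1 p.1, X2 p.1), X1 p.2)) = hh + hh + hh := by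
    rw [Aux.entropy_pair_of_indep ν hν1 (fun p => (X1 p.1, X2 p.1)) (fun p => X1 p.2) factB,
      HY12, HY3]
  -- ===== upper bound : ss + hh ≤ 2 dd =====
  have u1a : ∀ x y : ℝ, pr ν (fun p => (X1 p.1 + X2 p.1, -(X1 p.2))) (x, y)
      = pr ν (fun p => X1 p.1 + X2 p.1) x * pr ν (fun p => -(X1 p.2)) y := by
    intro x y
    have h1 : pr ν (fun p => (X1 p.1 + X2 p.1, -(X1 p.2))) (x, y)
        = pr μ (fun ω => X1 ω + X2 ω) x * pr μ (fun ω => -(X1 ω)) y :=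
      Aux.pr_prodmk μ (fun ω => X1 ω + X2 ω) (fun ω => -(X1 ω)) x y
    have h2 : pr ν (fun p => X1 p.1 + X2 p.1) x = pr μ (fun ω => X1 ω + X2 ω) x :=
      Aux.pr_fst μ hμ1 (fun ω => X1 ω + X2 ω) x
    have h3 : pr ν (fun p => -(X1 p.2)) y = pr μ (fun ω => -(X1 ω)) y :=
      Aux.pr_snd μ hμ1 (fun ω => -(X1 ω)) y
    rw [h1, ← h2, ← h3]
  have u1 : entropy ν (fun p => X1 p.1 + X2 p.1)
      ≤ entropy ν (fun p => X1 p.1 + X2 p.1 - X1 p.2) := by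
    have h1 : entropy ν (fun p => X1 p.1 + X2 p.1)
        ≤ entropy ν (fun p => (X1 p.1 + X2 p.1) + -(X1 p.2)) :=
      Aux.entropy_le_entropy_add ν hν0 hν1 (fun p => X1 p.1 + X2 p.1)
        (fun p => -(X1 p.2)) u1a
    rw [show (fun p : Ω × Ω => (X1 p.1 + X2 p.1) + -(X1 p.2))
        = (fun p : Ω × Ω => X1 p.1 + X2 p.1 - X1 p.2) from funext fun p => by ring] at h1
    exact h1
  have u2 : entropy ν (fun p => (X2 p.1 - X1 p.2, X1 p.1 + X2 p.1 - X1 p.2, X2 p.1))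
        + entropy ν (fun p => X1 p.1 + X2 p.1 - X1 p.2)
      ≤ entropy ν (fun p => (X2 p.1 - X1 p.2, X1 p.1 + X2 p.1 - X1 p.2))
        + entropy ν (fun p => (X1 p.1 + X2 p.1 - X1 p.2, X2 p.1)) :=
    Aux.ssa ν hν0 hν1 _ _ _
  have u3 : entropy ν (fun p => (X2 p.1 - X1 p.2, X1 p.1 + X2 p.1 - X1 p.2, X2 p.1))
      = hh + hh + hh := by
    have hinj : Function.Injective
        (fun x : (ℝ × ℝ) × ℝ => (x.1.2 - x.2, x.1.1 + x.1.2 - x.2, x.1.2)) := by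
      intro x y hxy
      obtain ⟨h1, h2, h3⟩ : x.1.2 - x.2 = y.1.2 - y.2
          ∧ x.1.1 + x.1.2 - x.2 = y.1.1 + y.1.2 - y.2 ∧ x.1.2 = y.1.2 := by
        simpa [Prod.ext_iff] using hxy
      exact Prod.ext (Prod.ext (by linarith) h3) (by linarith)
    have e : entropy ν (fun p => (X2 p.1 - X1 p.2, X1 p.1 + X2 p.1 - X1 p.2, X2 p.1))
        = entropy ν (fun p => ((X1 p.1, X2 p.1), X1 p.2)) :=
      Aux.entropy_comp_inj (g := fun x : (ℝ × ℝ) × ℝ =>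
        (x.1.2 - x.2, x.1.1 + x.1.2 - x.2, x.1.2)) ν
        (fun p => ((X1 p.1, X2 p.1), X1 p.2)) hinj
    rw [e, HB]
  have fact2base : ∀ (a : ℝ) (q : ℝ × ℝ),
      pr ν (fun p => (X1 p.1, (X2 p.1, X1 p.2))) (a, q)
        = pr ν (fun p => X1 p.1) a * pr ν (fun p => (X2 p.1, X1 p.2)) q := by
    intro a q
    have h1 : pr ν (fun p => (X1 p.1, (X2 p.1, X1 p.2))) (a, (q.1, q.2))
        = pr μ (fun ω => (X1 ω, X2 ω)) (a, q.1) * pr μ X1 q.2 :=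
      Aux.pr_prod13 μ X1 X2 X1 a q.1 q.2
    have h2 : pr ν (fun p => (X2 p.1, X1 p.2)) (q.1, q.2)
        = pr μ X2 q.1 * pr μ X1 q.2 := Aux.pr_prodmk μ X2 X1 q.1 q.2
    have h3 : pr ν (fun p => X1 p.1) a = pr μ X1 a := tY1 a
    calc pr ν (fun p => (X1 p.1, (X2 p.1, X1 p.2))) (a, q)
        = pr μ (fun ω => (X1 ω, X2 ω)) (a, q.1) * pr μ X1 q.2 := h1
      _ = pr μ X1 a * pr μ X2 q.1 * pr μ X1 q.2 := by rw [hindep]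
      _ = pr ν (fun p => X1 p.1) a * pr ν (fun p => (X2 p.1, X1 p.2)) q := by
          rw [h3, h2]; ring
  have fact2 : ∀ (a y : ℝ), pr ν (fun p => (X1 p.1, X2 p.1 - X1 p.2)) (a, y)
      = pr ν (fun p => X1 p.1) a * pr ν (fun p => X2 p.1 - X1 p.2) y :=
    fun a y => Aux.pr_comp_indep ν (fun p => X1 p.1) (fun p => (X2 p.1, X1 p.2))
      id (fun q : ℝ × ℝ => q.1 - q.2) fact2base a y
  have u4 : entropy ν (fun p => (X2 p.1 - X1 p.2, X1 p.1 + X2 p.1 - X1 p.2))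
      = hh + dd := by
    have hinj : Function.Injective (fun x : ℝ × ℝ => (x.2, x.1 + x.2)) := by
      intro x y hxy
      obtain ⟨h1, h2⟩ : x.2 = y.2 ∧ x.1 + x.2 = y.1 + y.2 := by
        simpa [Prod.ext_iff] using hxy
      exact Prod.ext (by linarith) h1
    have e : entropy ν (fun p => (X2 p.1 - X1 p.2, X1 p.1 + (X2 p.1 - X1 p.2)))
        = entropy ν (fun p => (X1 p.1, X2 p.1 - X1 p.2)) :=
      Aux.entropy_comp_inj (g := fun x : ℝ × ℝ => (x.2, x.1 + x.2)) ν
        (fun p => (X1 p.1, X2 p.1 - X1 p.2)) hinj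
    rw [show (fun p : Ω × Ω => (X2 p.1 - X1 p.2, X1 p.1 + (X2 p.1 - X1 p.2)))
        = (fun p : Ω × Ω => (X2 p.1 - X1 p.2, X1 p.1 + X2 p.1 - X1 p.2)) from
      funext fun p => Prod.ext rfl (by ring)] at e
    rw [e, Aux.entropy_pair_of_indep ν hν1 (fun p => X1 p.1)
      (fun p => X2 p.1 - X1 p.2) fact2, HY1, Hd23]
  have fact3base : ∀ (q : ℝ × ℝ) (b : ℝ),
      pr ν (fun p => ((X1 p.1, X1 p.2), X2 p.1)) (q, b)
        = pr ν (fun p => (X1 p.1, X1 p.2)) q * pr ν (fun p => X2 p.1) b := by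
    intro q b
    have h1 : pr ν (fun p => ((X1 p.1, X1 p.2), X2 p.1)) ((q.1, q.2), b)
        = pr μ (fun ω => (X1 ω, X2 ω)) (q.1, b) * pr μ X1 q.2 :=
      Aux.pr_prod13' μ X1 X2 X1 q.1 b q.2
    have h2 : pr ν (fun p => (X1 p.1, X1 p.2)) (q.1, q.2)
        = pr μ X1 q.1 * pr μ X1 q.2 := Aux.pr_prodmk μ X1 X1 q.1 q.2
    have h3 : pr ν (fun p => X2 p.1) b = pr μ X2 b := tY2 b
    calc pr ν (fun p => ((X1 p.1, X1 p.2), X2 p.1)) (q, b)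
        = pr μ (fun ω => (X1 ω, X2 ω)) (q.1, b) * pr μ X1 q.2 := h1
      _ = pr μ X1 q.1 * pr μ X2 b * pr μ X1 q.2 := by rw [hindep]
      _ = pr ν (fun p => (X1 p.1, X1 p.2)) q * pr ν (fun p => X2 p.1) b := by
          rw [h3, h2]; ring
  have fact3 : ∀ (x b : ℝ), pr ν (fun p => (X1 p.1 - X1 p.2, X2 p.1)) (x, b)
      = pr ν (fun p => X1 p.1 - X1 p.2) x * pr ν (fun p => X2 p.1) b :=
    fun x b => Aux.pr_comp_indep ν (fun p => (X1 p.1, X1 p.2)) (fun p => X2 p.1)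
      (fun q : ℝ × ℝ => q.1 - q.2) id fact3base x b
  have u5 : entropy ν (fun p => (X1 p.1 + X2 p.1 - X1 p.2, X2 p.1)) = dd + hh := by
    have hinj : Function.Injective (fun x : ℝ × ℝ => (x.1 + x.2, x.2)) := by
      intro x y hxy
      obtain ⟨h1, h2⟩ : x.1 + x.2 = y.1 + y.2 ∧ x.2 = y.2 := by
        simpa [Prod.ext_iff] using hxy
      exact Prod.ext (by linarith) h2
    have e : entropy ν (fun p => ((X1 p.1 - X1 p.2) + X2 p.1, X2 p.1))
        = entropy ν (fun p => (X1 p.1 - X1 p.2, X2 p.1)) :=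
      Aux.entropy_comp_inj (g := fun x : ℝ × ℝ => (x.1 + x.2, x.2)) ν
        (fun p => (X1 p.1 - X1 p.2, X2 p.1)) hinj
    rw [show (fun p : Ω × Ω => ((X1 p.1 - X1 p.2) + X2 p.1, X2 p.1))
        = (fun p : Ω × Ω => (X1 p.1 + X2 p.1 - X1 p.2, X2 p.1)) from
      funext fun p => Prod.ext (by ring) rfl] at e
    rw [e, Aux.entropy_pair_of_indep ν hν1 (fun p => X1 p.1 - X1 p.2)
      (fun p => X2 p.1) fact3, Hd13, HY2]
  have upper : ss + hh ≤ 2 * dd := by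
    have := u1
    rw [Hs12] at this
    linarith [u2, u3, u4, u5, this]
  -- ===== lower bound : dd + hh ≤ 2 ss =====
  have l2 : entropy ν (fun p => (X2 p.1, X1 p.1 - X2 p.1,
          (X1 p.1 + X1 p.2, X2 p.1 + X1 p.2)))
        + entropy ν (fun p => X1 p.1 - X2 p.1)
      ≤ entropy ν (fun p => (X2 p.1, X1 p.1 - X2 p.1))
        + entropy ν (fun p => (X1 p.1 - X2 p.1,
          (X1 p.1 + X1 p.2, X2 p.1 + X1 p.2))) :=
    Aux.ssa ν hν0 hν1 _ _ _
  have l3 : entropy ν (fun p => (X2 p.1, X1 p.1 - X2 p.1,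
      (X1 p.1 + X1 p.2, X2 p.1 + X1 p.2))) = hh + hh + hh := by
    have hinj : Function.Injective (fun x : (ℝ × ℝ) × ℝ =>
        (x.1.2, x.1.1 - x.1.2, (x.1.1 + x.2, x.1.2 + x.2))) := by
      intro x y hxy
      obtain ⟨h1, h2, h3, h4⟩ : x.1.2 = y.1.2 ∧ x.1.1 - x.1.2 = y.1.1 - y.1.2
          ∧ x.1.1 + x.2 = y.1.1 + y.2 ∧ x.1.2 + x.2 = y.1.2 + y.2 := by
        simpa [Prod.ext_iff] using hxy
      exact Prod.ext (Prod.ext (by linarith) h1) (by linarith)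
    have e : entropy ν (fun p => (X2 p.1, X1 p.1 - X2 p.1,
          (X1 p.1 + X1 p.2, X2 p.1 + X1 p.2)))
        = entropy ν (fun p => ((X1 p.1, X2 p.1), X1 p.2)) :=
      Aux.entropy_comp_inj (g := fun x : (ℝ × ℝ) × ℝ =>
        (x.1.2, x.1.1 - x.1.2, (x.1.1 + x.2, x.1.2 + x.2))) ν
        (fun p => ((X1 p.1, X2 p.1), X1 p.2)) hinj
    rw [e, HB]
  have l4 : entropy ν (fun p => (X2 p.1, X1 p.1 - X2 p.1)) = hh + hh := by
    have hinj : Function.Injective (fun x : ℝ × ℝ => (x.2, x.1 - x.2)) := by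
      intro x y hxy
      obtain ⟨h1, h2⟩ : x.2 = y.2 ∧ x.1 - x.2 = y.1 - y.2 := by
        simpa [Prod.ext_iff] using hxy
      exact Prod.ext (by linarith) h1
    have e : entropy ν (fun p => (X2 p.1, X1 p.1 - X2 p.1))
        = entropy ν (fun p => (X1 p.1, X2 p.1)) :=
      Aux.entropy_comp_inj (g := fun x : ℝ × ℝ => (x.2, x.1 - x.2)) ν
        (fun p => (X1 p.1, X2 p.1)) hinj
    rw [e, HY12]
  have l5 : entropy ν (fun p => (X1 p.1 - X2 p.1,
      (X1 p.1 + X1 p.2, X2 p.1 + X1 p.2))) ≤ ss + ss := by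
    have hinj : Function.Injective (fun x : ℝ × ℝ => (x.1 - x.2, (x.1, x.2))) := by
      intro x y hxy
      obtain ⟨-, h2, h3⟩ : x.1 - x.2 = y.1 - y.2 ∧ x.1 = y.1 ∧ x.2 = y.2 := by
        simpa [Prod.ext_iff] using hxy
      exact Prod.ext h2 h3
    have e : entropy ν (fun p => ((X1 p.1 + X1 p.2) - (X2 p.1 + X1 p.2),
          (X1 p.1 + X1 p.2, X2 p.1 + X1 p.2)))
        = entropy ν (fun p => (X1 p.1 + X1 p.2, X2 p.1 + X1 p.2)) :=
      Aux.entropy_comp_inj (g := fun x : ℝ × ℝ => (x.1 - x.2, (x.1, x.2))) ν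
        (fun p => (X1 p.1 + X1 p.2, X2 p.1 + X1 p.2)) hinj
    rw [show (fun p : Ω × Ω => ((X1 p.1 + X1 p.2) - (X2 p.1 + X1 p.2),
          (X1 p.1 + X1 p.2, X2 p.1 + X1 p.2)))
        = (fun p : Ω × Ω => (X1 p.1 - X2 p.1, (X1 p.1 + X1 p.2, X2 p.1 + X1 p.2))) from
      funext fun p => Prod.ext (by ring) rfl] at e
    rw [e]
    have hle := Aux.entropy_pair_le ν hν0 hν1 (fun p => X1 p.1 + X1 p.2)
      (fun p => X2 p.1 + X1 p.2)
    rw [Hs13, Hs23] at hle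
    exact hle
  have lower : dd + hh ≤ 2 * ss := by
    have hD := Hd12
    linarith [l2, l3, l4, l5, hD]
  -- ===== conclusion =====
  refine ⟨⟨?_, ?_⟩, ?_⟩
  · rw [mi_diff, mi_sum]; linarith
  · rw [mi_diff, mi_sum]; linarith
  · intro hne
    have hpos : 0 < dd - hh := lt_of_le_of_ne (by linarith) (Ne.symm hne)
    constructor
    · rw [le_div_iff₀ hpos]; linarith
    · rw [div_le_iff₀ hpos]; linarith
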